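/- Let N be a composite integer with prime factorization N = p_1^{e_1} ⋯ p_r^{e_r}, where the p_i are r ≥ 2 distinct primes and e_i ≥ 1. Let f ∈ (ℤ/Nℤ)[x] be a monic polynomial of degree D ≥ 1 whose reduction modulo p_i is irreducible in (ℤ/p_iℤ)[x] for every i = 1, …, r. Then the number M of polynomials h ∈ (ℤ/Nℤ)[x] with deg h < D such that (h(x) + 1)^N ≡ h(x)^N + 1 (mod f(x)) in (ℤ/Nℤ)[x] satisfies M · (p_1 ⋯ p_r)^D < N^{D + r}; equivalently, a uniformly random such h satisfies the congruence with probability less than N^r / (p_1 ⋯ p_r)^D. -/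

import Mathlib

/-!
Reduce modulo each prime `p i` and then modulo `f`: since `f mod p i` is irreducible, this sends a
solution `h` to a root of `(X + 1) ^ N - (X ^ N + 1)` in the field `𝔽_{p i}[x]/(f)`. In
characteristic `p` this polynomial is the Frobenius expansion of `(X + 1) ^ m - (X ^ m + 1)`, where
`m` is the prime-to-`p` part of `N`; its `X`-coefficient `m` is nonzero, and `m > 1` because `N`
has another prime factor. Having degree `< N`, it has at most `N - 1` roots, so the solutions fall
into at most `(N - 1) ^ r` classes. Two solutions in one class differ by a polynomial of degree
`< D` all of whose coefficients are divisible by every `p i`, hence by `∏ i, p i`; there are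
`(N / ∏ i, p i) ^ D` of those. Altogether `M ≤ (N - 1) ^ r * (N / ∏ i, p i) ^ D`.
-/

open Polynomial

theorem add_one_pow_sub_ne_zero {R : Type*} [CommRing R] (p : ℕ) [hp : Fact p.Prime] [CharP R p]
    {N : ℕ} (hN : 1 < ordCompl[p] N) : ((X + 1) ^ N - (X ^ N + 1) : R[X]) ≠ 0 := by
  have hN0 : N ≠ 0 := by rintro rfl; simp at hN
  have hm : ¬p ∣ ordCompl[p] N := Nat.not_dvd_ordCompl hp.out hN0
  rw [← Nat.ordProj_mul_ordCompl_eq_self N p]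
  generalize ordCompl[p] N = m at hN hm ⊢
  have hexpand : ((X + 1) ^ (p ^ N.factorization p * m) - (X ^ (p ^ N.factorization p * m) + 1)
      : R[X]) = expand R (p ^ N.factorization p) ((X + 1) ^ m - (X ^ m + 1)) := by
    simp only [map_sub, map_add, map_pow, expand_X, map_one, pow_mul, add_pow_char_pow, one_pow]
  have hcoeff : ((X + 1) ^ m - (X ^ m + 1) : R[X]).coeff 1 = m := by
    simp [coeff_X_add_one_pow, coeff_X_pow, coeff_one, hN.ne]
  rw [hexpand, Ne, expand_eq_zero (pow_pos hp.out.pos _)]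
  intro h
  rw [h, coeff_zero, eq_comm, CharP.cast_eq_zero_iff R p] at hcoeff
  exact hm hcoeff

theorem add_one_pow_sub_ne_zero_of_prime_dvd {R : Type*} [CommRing R] {p q N : ℕ}
    [hp : Fact p.Prime] [CharP R p] (hq : q.Prime) (hqp : q ≠ p) (hqN : q ∣ N) (hN : N ≠ 0) :
    ((X + 1) ^ N - (X ^ N + 1) : R[X]) ≠ 0 := by
  have hpq : ¬p ∣ q := by rwa [Nat.prime_dvd_prime_iff_eq hp.out hq, eq_comm]
  refine add_one_pow_sub_ne_zero p (hq.one_lt.trans_le (Nat.le_of_dvd ?_ ?_))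
  · exact Nat.ordCompl_pos p hN
  · exact Nat.dvd_ordCompl_of_dvd_not_dvd hqN hpq

theorem natDegree_add_one_pow_sub_lt {R : Type*} [CommRing R] [Nontrivial R] {N : ℕ}
    (hN : N ≠ 0) : ((X + 1) ^ N - (X ^ N + 1) : R[X]).natDegree < N := by
  refine IsMonicOfDegree.natDegree_sub_lt hN ?_ ((isMonicOfDegree_X_pow R N).add_right ?_)
  · simpa [map_one] using (isMonicOfDegree_X_add_one (1 : R)).pow N
  · rw [natDegree_one]; omega

theorem isRoot_add_one_pow_sub_of_dvd {A B : Type*} [CommRing A] [CommRing B] (ψ : A →+* B)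
    (N : ℕ) {g h : A} (hg : ψ g = 0) (hdvd : g ∣ (h + 1) ^ N - (h ^ N + 1)) :
    ((X + 1) ^ N - (X ^ N + 1) : B[X]).IsRoot (ψ h) := by
  obtain ⟨c, hc⟩ := hdvd
  simpa [hg] using congrArg ψ hc

theorem Polynomial.map_eq_zero_of_mk_map_eq_zero {A K : Type*} [CommRing A] [Field K]
    (π : A →+* K) {f g : A[X]} (hf : f.Monic) (hg : g.degree < f.natDegree)
    (h : AdjoinRoot.mk (f.map π) (g.map π) = 0) : g.map π = 0 := by
  refine eq_zero_of_dvd_of_degree_lt (AdjoinRoot.mk_eq_zero.mp h) ?_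
  rw [degree_eq_natDegree (hf.map π).ne_zero, hf.natDegree_map]
  exact degree_map_le.trans_lt hg

theorem Nat.prod_primes_dvd_of_injective {ι : Type*} [Fintype ι] {p : ι → ℕ}
    (hp : ∀ i, (p i).Prime) (hinj : Function.Injective p) {n : ℕ} (h : ∀ i, p i ∣ n) :
    ∏ i, p i ∣ n := by
  classical
  have := Finset.prod_primes_dvd (s := Finset.univ.image p) n
    (by simpa using fun i => (hp i).prime) (by simpa using h)
  rwa [Finset.prod_image fun i _ j _ hij => hinj hij] at this

theorem ZMod.castHom_prod_primes_eq_zero {n : ℕ} [NeZero n] {ι : Type*} [Fintype ι] {p : ι → ℕ}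
    (hp : ∀ i, (p i).Prime) (hinj : Function.Injective p) (hdvd : ∀ i, p i ∣ n)
    (hR : ∏ i, p i ∣ n) {x : ZMod n} (hx : ∀ i, ZMod.castHom (hdvd i) (ZMod (p i)) x = 0) :
    ZMod.castHom hR (ZMod (∏ i, p i)) x = 0 := by
  rw [← ZMod.natCast_zmod_val x, map_natCast, ZMod.natCast_eq_zero_iff]
  refine Nat.prod_primes_dvd_of_injective hp hinj fun i => ?_
  rw [← ZMod.natCast_eq_zero_iff, ← map_natCast (ZMod.castHom (hdvd i) (ZMod (p i))),
    ZMod.natCast_zmod_val, hx i]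

theorem Set.ncard_le_ncard_mul_ncard_of_sub_mem {G H : Type*} [AddGroup G] {φ : G → H}
    {S K : Set G} {T : Set H} (hT : T.Finite) (hK : K.Finite) (hST : Set.MapsTo φ S T)
    (hfib : ∀ x ∈ S, ∀ y ∈ S, φ x = φ y → x - y ∈ K) : S.ncard ≤ T.ncard * K.ncard := by
  have hsec (x : S) : ∃ y ∈ S, φ y = φ x := ⟨x, x.2, rfl⟩
  let Φ : S → T × K := fun x =>
    (⟨φ x, hST x.2⟩, ⟨x - Function.invFunOn φ S (φ x),
      hfib x x.2 _ (Function.invFunOn_mem (hsec x)) (Function.invFunOn_eq (hsec x)).symm⟩)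
  have hΦ : Function.Injective Φ := by
    intro x y hxy
    simp only [Φ, Prod.mk.injEq, Subtype.mk.injEq] at hxy
    rw [hxy.1, sub_left_inj] at hxy
    exact Subtype.ext hxy.2
  have := hT.to_subtype
  have := hK.to_subtype
  simpa [Nat.card_coe_set_eq] using Nat.card_le_card_of_injective Φ hΦ

theorem Polynomial.finite_setOf_degree_lt {A : Type*} [Semiring A] [Finite A] (D : ℕ) :
    {h : A[X] | h.degree < D}.Finite := by
  have : Finite (degreeLT A D) := Finite.of_equiv _ (degreeLTEquiv A D).toEquiv.symm
  exact (degreeLT A D : Set A[X]).toFinite.subset fun h hh => mem_degreeLT.mpr hh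

theorem RingHom.card_ker_mul_card_of_surjective {A B : Type*} [Ring A] [Ring B] (π : A →+* B)
    (hπ : Function.Surjective π) : Nat.card (RingHom.ker π) * Nat.card B = Nat.card A := by
  have := AddSubgroup.card_mul_index π.toAddMonoidHom.ker
  rwa [AddSubgroup.index_ker, AddMonoidHom.range_eq_top.mpr hπ, AddSubgroup.card_top] at this

theorem Polynomial.ncard_setOf_degree_lt_map_eq_zero_mul_le {A B : Type*} [Ring A] [Ring B]
    [Finite A] (π : A →+* B) (hπ : Function.Surjective π) (D : ℕ) :
    {h : A[X] | h.degree < D ∧ h.map π = 0}.ncard * Nat.card B ^ D ≤ Nat.card A ^ D := by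
  let coeffs : {h : A[X] | h.degree < D ∧ h.map π = 0} → Fin D → RingHom.ker π :=
    fun h j => ⟨h.1.coeff j, by rw [RingHom.mem_ker, ← coeff_map, h.2.2, coeff_zero]⟩
  have hcoeffs : Function.Injective coeffs := by
    rintro ⟨g, hg, _⟩ ⟨h, hh, _⟩ hgh
    refine Subtype.ext (ext fun j => ?_)
    by_cases hj : j < D
    · exact congrArg Subtype.val (congrFun hgh ⟨j, hj⟩)
    · have hDj : (D : WithBot ℕ) ≤ j := by exact_mod_cast not_lt.mp hj
      rw [coeff_eq_zero_of_degree_lt (hg.trans_le hDj),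
        coeff_eq_zero_of_degree_lt (hh.trans_le hDj)]
  calc _ ≤ Nat.card (Fin D → RingHom.ker π) * Nat.card B ^ D :=
        Nat.mul_le_mul_right _ (Nat.card_le_card_of_injective coeffs hcoeffs)
    _ = Nat.card A ^ D := by
        rw [Nat.card_fun, Nat.card_eq_fintype_card (α := Fin D), Fintype.card_fin, ← mul_pow,
          π.card_ker_mul_card_of_surjective hπ]

theorem ncard_setOf_dvd_add_one_pow_sub_le {N : ℕ} [NeZero N] {ι : Type*} [Fintype ι]
    {p : ι → ℕ} [∀ i, Fact (p i).Prime] (hinj : Function.Injective p) (hdvd : ∀ i, p i ∣ N)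
    (hR : ∏ i, p i ∣ N) {f : (ZMod N)[X]} (hmonic : f.Monic)
    [∀ i, Fact (Irreducible (f.map (ZMod.castHom (hdvd i) (ZMod (p i)))))]
    (hQ : ∀ i, ((X + 1) ^ N - (X ^ N + 1) :
      (AdjoinRoot (f.map (ZMod.castHom (hdvd i) (ZMod (p i)))))[X]) ≠ 0) :
    {h : (ZMod N)[X] | h.degree < f.natDegree ∧ f ∣ (h + 1) ^ N - (h ^ N + 1)}.ncard ≤
      (∏ i, ((X + 1) ^ N - (X ^ N + 1) :
        (AdjoinRoot (f.map (ZMod.castHom (hdvd i) (ZMod (p i)))))[X]).roots.toFinset.card) *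
      {h : (ZMod N)[X] | h.degree < f.natDegree ∧
        h.map (ZMod.castHom hR (ZMod (∏ i, p i))) = 0}.ncard := by
  classical
  set π := fun i => ZMod.castHom (hdvd i) (ZMod (p i))
  let φ : (ZMod N)[X] → ∀ i, AdjoinRoot (f.map (π i)) := fun h i => AdjoinRoot.mk _ (h.map (π i))
  rw [← Fintype.card_piFinset, ← Set.ncard_coe_finset]
  refine Set.ncard_le_ncard_mul_ncard_of_sub_mem (φ := φ) (Finset.finite_toSet _)
    ((finite_setOf_degree_lt _).subset fun h hh => hh.1) ?_ ?_
  · rintro h ⟨-, hfh⟩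
    refine Fintype.mem_piFinset.mpr fun i => Multiset.mem_toFinset.mpr ((mem_roots (hQ i)).mpr ?_)
    exact isRoot_add_one_pow_sub_of_dvd ((AdjoinRoot.mk _).comp (mapRingHom (π i))) N
      AdjoinRoot.mk_self hfh
  · rintro x ⟨hx, -⟩ y ⟨hy, -⟩ hxy
    have hxyD : (x - y).degree < f.natDegree := (degree_sub_le x y).trans_lt (max_lt hx hy)
    have hred (i : ι) : (x - y).map (π i) = 0 :=
      map_eq_zero_of_mk_map_eq_zero (π i) hmonic hxyD (by
        rw [Polynomial.map_sub, map_sub, sub_eq_zero]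
        exact congrFun hxy i)
    refine ⟨hxyD, ext fun j => ?_⟩
    rw [coeff_map, coeff_zero]
    exact ZMod.castHom_prod_primes_eq_zero (fun i => Fact.out) hinj hdvd hR fun i => by
      rw [← coeff_map, hred i, coeff_zero]

theorem stmt_5_general (N r : ℕ) (hr : 2 ≤ r) (p e : Fin r → ℕ) (hp : ∀ i, (p i).Prime)
    (hinj : Function.Injective p) (hNfact : N = ∏ i, p i ^ e i)
    (hdvd : ∀ i, p i ∣ N)
    (D : ℕ) (f : Polynomial (ZMod N)) (hmonic : f.Monic)
    (hdeg : f.natDegree = D)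
    (hirr : ∀ i, Irreducible (f.map (ZMod.castHom (hdvd i) (ZMod (p i))))) :
    {h : Polynomial (ZMod N) |
      h.degree < (D : WithBot ℕ) ∧ f ∣ ((h + 1) ^ N - (h ^ N + 1))}.ncard * (∏ i, p i) ^ D
      < N ^ (D + r) := by
  have hN : N ≠ 0 := hNfact ▸ Finset.prod_ne_zero_iff.mpr fun i _ => pow_ne_zero _ (hp i).ne_zero
  have : NeZero N := ⟨hN⟩
  have : Nontrivial (Fin r) := Fin.nontrivial_iff_two_le.mpr hr
  have (i : Fin r) : Fact (p i).Prime := ⟨hp i⟩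
  have (i : Fin r) : Fact (Irreducible (f.map (ZMod.castHom (hdvd i) (ZMod (p i))))) := ⟨hirr i⟩
  have hR : ∏ i, p i ∣ N := Nat.prod_primes_dvd_of_injective hp hinj hdvd
  have hQ (i : Fin r) : ((X + 1) ^ N - (X ^ N + 1) :
      (AdjoinRoot (f.map (ZMod.castHom (hdvd i) (ZMod (p i)))))[X]) ≠ 0 := by
    have : CharP (AdjoinRoot (f.map (ZMod.castHom (hdvd i) (ZMod (p i))))) (p i) :=
      charP_of_injective_algebraMap' (ZMod (p i)) _
    obtain ⟨j, hji⟩ := exists_ne i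
    exact add_one_pow_sub_ne_zero_of_prime_dvd (hp j) (hinj.ne hji) (hdvd j) hN
  have hroots (i : Fin r) : ((X + 1) ^ N - (X ^ N + 1) :
      (AdjoinRoot (f.map (ZMod.castHom (hdvd i) (ZMod (p i)))))[X]).roots.toFinset.card ≤ N - 1 :=
    (Multiset.toFinset_card_le _).trans <| (card_roots' _).trans <|
      Nat.le_sub_one_of_lt (natDegree_add_one_pow_sub_lt hN)
  have hker := ncard_setOf_degree_lt_map_eq_zero_mul_le (ZMod.castHom hR (ZMod (∏ i, p i)))
    (ZMod.ringHom_surjective _) D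
  rw [Nat.card_zmod, Nat.card_zmod] at hker
  subst hdeg
  calc _ ≤ (N - 1) ^ r * N ^ f.natDegree := by
        grw [ncard_setOf_dvd_add_one_pow_sub_le hinj hdvd hR hmonic hQ, mul_assoc, hker,
          Finset.prod_le_prod' fun i _ => hroots i, Finset.prod_const, Finset.card_fin]
    _ < N ^ r * N ^ f.natDegree := by gcongr; omega
    _ = N ^ (f.natDegree + r) := by rw [← pow_add, add_comm]

/-- Let `N = ∏ i, p i ^ e i` be composite with `r ≥ 2` distinct prime factors, and let
`f ∈ (ℤ/Nℤ)[x]` be monic of degree `D ≥ 1` whose reduction modulo each `p i` is irreducible.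
Then the number `M` of polynomials `h` with `deg h < D` satisfying
`(h+1)^N ≡ h^N + 1 (mod f)` satisfies `M * (∏ i, p i)^D < N^(D + r)`. -/
theorem stmt_5 (N r : ℕ) (hr : 2 ≤ r) (p e : Fin r → ℕ) (hp : ∀ i, (p i).Prime)
    (hinj : Function.Injective p) (he : ∀ i, 1 ≤ e i) (hNfact : N = ∏ i, p i ^ e i)
    (hdvd : ∀ i, p i ∣ N)
    (D : ℕ) (hD : 1 ≤ D) (f : Polynomial (ZMod N)) (hmonic : f.Monic)
    (hdeg : f.natDegree = D)
    (hirr : ∀ i, Irreducible (f.map (ZMod.castHom (hdvd i) (ZMod (p i))))) :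
    {h : Polynomial (ZMod N) |
      h.degree < (D : WithBot ℕ) ∧ f ∣ ((h + 1) ^ N - (h ^ N + 1))}.ncard * (∏ i, p i) ^ D
      < N ^ (D + r) :=
  stmt_5_general N r hr p e hp hinj hNfact hdvd D f hmonic hdeg hirr
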